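/- Let G be a finite simple graph with vertex set V, let k, m be positive integers with m ≥ k, and suppose: (a) |Γ(X)| ≥ k for every nonempty X ⊆ V with X⁺ ≠ V (G is k-connected); (b) T ⊆ V is an m-dominating set; (c) |Γ_T(Z)| ≥ k − 1 for every T-cut Z (T is (k−1)-connected). Then for every demand cut X, i.e., every T-cut X with |Γ_T(X)| = k − 1, there exists a T-path in G that covers X and has at most two inner vertices. -/

import Mathlib

/-!
Let `S = Γ_T(X)`, `Y = T \ X⁺` and `U = Γ(X) \ T`. Every vertex outside `T` has at least
`m ≥ k > |S|` neighbours in `T`, hence one in `X ∪ Y`. If some `u ∈ U` is adjacent to `Y`, we get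
a covering path `a - u - b`. Otherwise `D = X ∪ U` has `Y ∩ D⁺ = ∅`, so `|Γ(D)| ≥ k > |S|` and some
`w ∈ Γ(D) \ S` exists; `w` is adjacent to some `d ∈ U`, lies outside `T`, and its neighbour in
`X ∪ Y` must lie in `Y`, giving a covering path `a - d - w - t`.
-/

/-- `nbr G X` is Γ(X): the set of vertices outside `X` adjacent to a vertex of `X`. -/
def nbr {V : Type*} [Fintype V] [DecidableEq V] (G : SimpleGraph V) [DecidableRel G.Adj]
    (X : Finset V) : Finset V :=
  Finset.univ.filter (fun v => v ∉ X ∧ ∃ u ∈ X, G.Adj u v)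

/-- `cl G X` is X⁺ = X ∪ Γ(X). -/
def cl {V : Type*} [Fintype V] [DecidableEq V] (G : SimpleGraph V) [DecidableRel G.Adj]
    (X : Finset V) : Finset V :=
  X ∪ nbr G X

open Finset

section

variable {V : Type*} [Fintype V] [DecidableEq V] {G : SimpleGraph V} [DecidableRel G.Adj]
  {T X : Finset V}

@[simp]
lemma mem_nbr {v : V} : v ∈ nbr G X ↔ v ∉ X ∧ ∃ u ∈ X, G.Adj u v := by
  simp [nbr]

@[simp]
lemma mem_cl {v : V} : v ∈ cl G X ↔ v ∈ X ∨ v ∈ nbr G X := by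
  simp [cl]

lemma mem_nbr_of_adj {u v : V} (hu : u ∈ X) (hv : v ∉ X) (huv : G.Adj u v) : v ∈ nbr G X :=
  mem_nbr.2 ⟨hv, u, hu, huv⟩

lemma not_adj_of_mem_sdiff_cl {a b : V} (ha : a ∈ X) (hb : b ∈ T \ cl G X) : ¬G.Adj a b := by
  intro hab
  have hbX : b ∉ X := fun h => (mem_sdiff.1 hb).2 (mem_cl.2 (Or.inl h))
  exact (mem_sdiff.1 hb).2 (mem_cl.2 (Or.inr (mem_nbr_of_adj ha hbX hab)))

lemma mem_sdiff_cl_of_notMem {t : V} (htT : t ∈ T) (htX : t ∉ X) (htS : t ∉ nbr G X ∩ T) :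
    t ∈ T \ cl G X := by
  refine mem_sdiff.2 ⟨htT, fun h => ?_⟩
  rcases mem_cl.1 h with h | h
  exacts [htX h, htS (mem_inter.2 ⟨h, htT⟩)]

lemma exists_adj_mem_or_mem_sdiff_cl {v : V}
    (h : #(nbr G X ∩ T) < #(T.filter (fun u => G.Adj v u))) :
    ∃ t, G.Adj v t ∧ (t ∈ X ∨ t ∈ T \ cl G X) := by
  obtain ⟨t, ht, htS⟩ := exists_mem_notMem_of_card_lt_card h
  obtain ⟨htT, hvt⟩ := mem_filter.1 ht
  by_cases htX : t ∈ X
  · exact ⟨t, hvt, Or.inl htX⟩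
  · exact ⟨t, hvt, Or.inr (mem_sdiff_cl_of_notMem htT htX htS)⟩

def HasShortCoveringTPath (G : SimpleGraph V) [DecidableRel G.Adj] (T X : Finset V) : Prop :=
  ∃ (a b : V) (p : G.Walk a b), p.IsPath ∧ a ∈ X ∧ b ∈ T \ cl G X ∧
    (∀ w ∈ p.support, w ≠ a → w ≠ b → w ∉ T) ∧ p.length ≤ 3

lemma hasShortCoveringTPath_of_adj_adj {a u b : V} (ha : a ∈ X) (hb : b ∈ T \ cl G X)
    (hu : u ∉ T) (hau : G.Adj a u) (hub : G.Adj u b) : HasShortCoveringTPath G T X := by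
  have hab : a ≠ b := fun h => (mem_sdiff.1 hb).2 (mem_cl.2 (Or.inl (h ▸ ha)))
  refine ⟨a, b, .cons hau (.cons hub .nil), ?_, ha, hb, ?_, by simp⟩
  · simp [SimpleGraph.Walk.isPath_def, hab, hau.ne, hub.ne]
  · intro w hw hwa hwb
    obtain rfl : w = u := by simp_all
    exact hu

lemma hasShortCoveringTPath_of_adj_adj_adj {a d w t : V} (ha : a ∈ X) (ht : t ∈ T \ cl G X)
    (hd : d ∉ T) (hw : w ∉ T) (had : G.Adj a d) (hdw : G.Adj d w) (hwt : G.Adj w t) :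
    HasShortCoveringTPath G T X := by
  have htT : t ∈ T := (mem_sdiff.1 ht).1
  have hat : a ≠ t := fun h => (mem_sdiff.1 ht).2 (mem_cl.2 (Or.inl (h ▸ ha)))
  have haw : a ≠ w := fun h => not_adj_of_mem_sdiff_cl ha ht (h ▸ hwt)
  have hdt : d ≠ t := fun h => hd (h ▸ htT)
  refine ⟨a, t, .cons had (.cons hdw (.cons hwt .nil)), ?_, ha, ht, ?_, by simp⟩
  · simp [SimpleGraph.Walk.isPath_def, hat, haw, hdt, had.ne, hdw.ne, hwt.ne]
  · intro v hv hva hvt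
    simp only [SimpleGraph.Walk.support_cons, SimpleGraph.Walk.support_nil, List.mem_cons,
      List.not_mem_nil, or_false] at hv
    rcases hv with rfl | rfl | rfl | rfl
    exacts [absurd rfl hva, hd, hw, absurd rfl hvt]

section NoDirectPath

variable (hdirect : ∀ u ∈ nbr G X \ T, ∀ b ∈ T \ cl G X, ¬G.Adj u b)
include hdirect

lemma notMem_cl_union_of_forall_not_adj {b : V} (hb : b ∈ T \ cl G X) :
    b ∉ cl G (X ∪ (nbr G X \ T)) := by
  obtain ⟨hbT, hbcl⟩ := mem_sdiff.1 hb
  intro h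
  rcases mem_cl.1 h with h | h
  · rcases mem_union.1 h with h | h
    exacts [hbcl (mem_cl.2 (Or.inl h)), (mem_sdiff.1 h).2 hbT]
  · obtain ⟨-, d, hd, hdb⟩ := mem_nbr.1 h
    rcases mem_union.1 hd with hdX | hdU
    exacts [not_adj_of_mem_sdiff_cl hdX hb hdb, hdirect d hdU b hb hdb]

lemma hasShortCoveringTPath_of_forall_not_adj
    (hkey : ∀ v ∉ T, ∃ t, G.Adj v t ∧ (t ∈ X ∨ t ∈ T \ cl G X))
    (hcard : #(nbr G X ∩ T) < #(nbr G (X ∪ (nbr G X \ T)))) :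
    HasShortCoveringTPath G T X := by
  obtain ⟨w, hwN, hwS⟩ := exists_mem_notMem_of_card_lt_card hcard
  obtain ⟨hwD, d, hdD, hdw⟩ := mem_nbr.1 hwN
  have hwX : w ∉ X := fun h => hwD (mem_union_left _ h)
  have hwU : w ∉ nbr G X \ T := fun h => hwD (mem_union_right _ h)
  have hdU : d ∈ nbr G X \ T := by
    refine (mem_union.1 hdD).resolve_left fun hdX => ?_
    have hwΓ := mem_nbr_of_adj hdX hwX hdw
    by_cases hwT : w ∈ T
    exacts [hwS (mem_inter.2 ⟨hwΓ, hwT⟩), hwU (mem_sdiff.2 ⟨hwΓ, hwT⟩)]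
  have hwT : w ∉ T := fun hwT =>
    hdirect d hdU w (mem_sdiff_cl_of_notMem hwT hwX hwS) hdw
  obtain ⟨t, hwt, htX | htY⟩ := hkey w hwT
  · exact absurd (mem_sdiff.2 ⟨mem_nbr_of_adj htX hwX hwt.symm, hwT⟩) hwU
  · obtain ⟨hdΓ, hdT⟩ := mem_sdiff.1 hdU
    obtain ⟨-, a, ha, had⟩ := mem_nbr.1 hdΓ
    exact hasShortCoveringTPath_of_adj_adj_adj ha htY hdT hwT had hdw hwt

end NoDirectPath

end

theorem stmt_3_general {V : Type*} [Fintype V] [DecidableEq V]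
    (G : SimpleGraph V) [DecidableRel G.Adj] (k m : ℕ) (hk : 1 ≤ k) (hkm : k ≤ m)
    -- (a) G is k-connected
    (hGconn : ∀ X : Finset V, X.Nonempty → cl G X ≠ Finset.univ → k ≤ (nbr G X).card)
    -- (b) T is an m-dominating set
    (T : Finset V)
    (hdom : ∀ v : V, v ∉ T → m ≤ (T.filter (fun u => G.Adj v u)).card) :
    -- for every demand cut X there is a T-path covering X with at most two inner nodes
    ∀ X : Finset V, X ⊆ T → X.Nonempty → (T \ cl G X).Nonempty →
      (nbr G X ∩ T).card = k - 1 →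
      ∃ (a b : V) (p : G.Walk a b), p.IsPath ∧ a ∈ X ∧ b ∈ T \ cl G X ∧
        (∀ w ∈ p.support, w ≠ a → w ≠ b → w ∉ T) ∧ p.length ≤ 3 := by
  intro X _ hXne ⟨b, hb⟩ hScard
  have hS : #(nbr G X ∩ T) < k := by omega
  by_cases hdirect : ∃ u ∈ nbr G X \ T, ∃ b ∈ T \ cl G X, G.Adj u b
  · obtain ⟨u, hu, b, hb, hub⟩ := hdirect
    obtain ⟨hΓ, huT⟩ := mem_sdiff.1 hu
    obtain ⟨-, a, ha, hau⟩ := mem_nbr.1 hΓ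
    exact hasShortCoveringTPath_of_adj_adj ha hb huT hau hub
  · push Not at hdirect
    have hcl : cl G (X ∪ (nbr G X \ T)) ≠ univ := fun h =>
      notMem_cl_union_of_forall_not_adj hdirect hb (h ▸ mem_univ b)
    exact hasShortCoveringTPath_of_forall_not_adj hdirect
      (fun v hv => exists_adj_mem_or_mem_sdiff_cl (hS.trans_le (hkm.trans (hdom v hv))))
      (hS.trans_le (hGconn _ (hXne.mono subset_union_left) hcl))

theorem stmt_3 {V : Type*} [Fintype V] [DecidableEq V]
    (G : SimpleGraph V) [DecidableRel G.Adj] (k m : ℕ) (hk : 1 ≤ k) (hkm : k ≤ m)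
    -- (a) G is k-connected
    (hGconn : ∀ X : Finset V, X.Nonempty → cl G X ≠ Finset.univ → k ≤ (nbr G X).card)
    -- (b) T is an m-dominating set
    (T : Finset V)
    (hdom : ∀ v : V, v ∉ T → m ≤ (T.filter (fun u => G.Adj v u)).card)
    -- (c) T is (k-1)-connected: |Γ_T(Z)| ≥ k-1 for every T-cut Z
    (hTconn : ∀ Z : Finset V, Z ⊆ T → Z.Nonempty → (T \ cl G Z).Nonempty →
      k - 1 ≤ (nbr G Z ∩ T).card) :
    -- for every demand cut X there is a T-path covering X with at most two inner nodes
    ∀ X : Finset V, X ⊆ T → X.Nonempty → (T \ cl G X).Nonempty →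
      (nbr G X ∩ T).card = k - 1 →
      ∃ (a b : V) (p : G.Walk a b), p.IsPath ∧ a ∈ X ∧ b ∈ T \ cl G X ∧
        (∀ w ∈ p.support, w ≠ a → w ≠ b → w ∉ T) ∧ p.length ≤ 3 :=
  stmt_3_general G k m hk hkm hGconn T hdom
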